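/- arXiv:1802.08928 — 4 statements merged into one kernel-verified Lean document; each statement's English description precedes it below -/
import Mathlib

section
/- Let n ≥ 1 and let H be a real n×n matrix which is symmetric and has trace zero. Then for every vector v : Fin n → ℝ with ∑ᵢ (v i)² = 1 one has ∑ᵢ ((H.mulVec v) i)² ≤ ((n−1)/n) · ∑ᵢ ∑ⱼ (H i j)²; that is, ‖Hv‖² ≤ ((n−1)/n)·‖H‖_F² where ‖·‖_F denotes the Frobenius norm. -/
/-- Pointwise (linear-algebra) form of the improved Kato inequality: for a
symmetric trace-free real `n × n` matrix `H` and a unit vector `v`,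
`‖H v‖² ≤ ((n-1)/n) ‖H‖_F²`. -/
theorem improved_kato_matrix
    (n : ℕ) (hn : 1 ≤ n)
    (H : Matrix (Fin n) (Fin n) ℝ) (hsymm : H.IsSymm)
    (htr : Matrix.trace H = 0)
    (v : Fin n → ℝ) (hv : ∑ i, (v i) ^ 2 = 1) :
    ∑ i, (H.mulVec v i) ^ 2 ≤ (((n : ℝ) - 1) / n) * ∑ i, ∑ j, (H i j) ^ 2 := by
  have hsym : ∀ i j, H j i = H i j := fun i j => hsymm.apply i j
  rcases eq_or_lt_of_le hn with h1 | h2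
  · -- n = 1 case
    subst h1
    have h0 : H 0 0 = 0 := by simpa [Matrix.trace, Matrix.diag] using htr
    simp [Matrix.mulVec, dotProduct, Fin.sum_univ_one, h0]
  -- n ≥ 2
  have hn2 : (2:ℝ) ≤ n := by exact_mod_cast h2
  set w : Fin n → ℝ := H.mulVec v with hw
  have hwdef : ∀ i, w i = ∑ j, H i j * v j := by
    intro i; simp [hw, Matrix.mulVec, dotProduct]
  set t : ℝ := ∑ i, v i * w i with ht
  set S : ℝ := ∑ i, ∑ j, (H i j) ^ 2 with hS
  set W : ℝ := ∑ i, (w i) ^ 2 with hW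
  have htrH : ∑ i, H i i = 0 := by simpa [Matrix.trace, Matrix.diag] using htr
  -- column sums: ∑ i, H i j * v i = w j
  have hcol : ∀ j, ∑ i, H i j * v i = w j := by
    intro j
    rw [hwdef]
    exact Finset.sum_congr rfl fun i _ => by rw [hsym]
  set C : Fin n → Fin n → ℝ :=
    fun i j => H i j - v i * w j - w i * v j + t * v i * v j with hC
  have hCsym : ∀ i j, C j i = C i j := by intro i j; simp only [hC, hsym]; ring
  have hCv : ∀ i, ∑ j, C i j * v j = 0 := by
    intro i
    simp only [hC]
    have : ∑ j, (H i j - v i * w j - w i * v j + t * v i * v j) * v j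
        = (∑ j, H i j * v j) - v i * (∑ j, w j * v j) - w i * (∑ j, v j * v j)
          + t * v i * (∑ j, v j * v j) := by
      rw [Finset.mul_sum, Finset.mul_sum, Finset.mul_sum, ← Finset.sum_sub_distrib,
        ← Finset.sum_sub_distrib, ← Finset.sum_add_distrib]
      exact Finset.sum_congr rfl fun j _ => by ring
    rw [this, ← hwdef]
    have hv' : ∑ j, v j * v j = 1 := by
      rw [← hv]; exact Finset.sum_congr rfl fun j _ => (sq (v j)).symm
    have htw : ∑ j, w j * v j = t := by
      rw [ht]; exact Finset.sum_congr rfl fun j _ => by ring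
    rw [hv', htw]; ring
  -- helper double sum identities
  have hHvw : ∑ i, ∑ j, H i j * (v i * w j) = W := by
    rw [Finset.sum_comm]
    have : ∀ j, ∑ i, H i j * (v i * w j) = (∑ i, H i j * v i) * w j := by
      intro j; rw [Finset.sum_mul]; exact Finset.sum_congr rfl fun i _ => by ring
    simp only [this, hcol, hW]
    exact Finset.sum_congr rfl fun i _ => (sq (w i)).symm
  have hHwv : ∑ i, ∑ j, H i j * (w i * v j) = W := by
    have : ∀ i, ∑ j, H i j * (w i * v j) = w i * ∑ j, H i j * v j := by
      intro i; rw [Finset.mul_sum]; exact Finset.sum_congr rfl fun j _ => by ring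
    simp only [this, ← hwdef, hW]
    exact Finset.sum_congr rfl fun i _ => (sq (w i)).symm
  have hHvv : ∑ i, ∑ j, H i j * (v i * v j) = t := by
    have : ∀ i, ∑ j, H i j * (v i * v j) = v i * ∑ j, H i j * v j := by
      intro i; rw [Finset.mul_sum]; exact Finset.sum_congr rfl fun j _ => by ring
    simp only [this, ← hwdef, ht]
  -- ∑∑ C * (v i * w j) = 0 etc.
  have hCvw : ∑ i, ∑ j, C i j * (v i * w j) = 0 := by
    rw [Finset.sum_comm]
    have : ∀ j, ∑ i, C i j * (v i * w j) = (∑ i, C j i * v i) * w j := by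
      intro j; rw [Finset.sum_mul]
      exact Finset.sum_congr rfl fun i _ => by rw [hCsym]; ring
    simp [this, hCv]
  have hCwv : ∑ i, ∑ j, C i j * (w i * v j) = 0 := by
    have : ∀ i, ∑ j, C i j * (w i * v j) = w i * ∑ j, C i j * v j := by
      intro i; rw [Finset.mul_sum]; exact Finset.sum_congr rfl fun j _ => by ring
    simp [this, hCv]
  have hCvv : ∑ i, ∑ j, C i j * (v i * v j) = 0 := by
    have : ∀ i, ∑ j, C i j * (v i * v j) = v i * ∑ j, C i j * v j := by
      intro i; rw [Finset.mul_sum]; exact Finset.sum_congr rfl fun j _ => by ring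
    simp [this, hCv]
  -- Frobenius norm of C
  have hC2 : ∑ i, ∑ j, (C i j) ^ 2 = S - 2 * W + t ^ 2 := by
    have step : ∀ i, ∑ j, (C i j) ^ 2
        = (∑ j, C i j * H i j) - (∑ j, C i j * (v i * w j))
          - (∑ j, C i j * (w i * v j)) + t * ∑ j, C i j * (v i * v j) := by
      intro i
      rw [Finset.mul_sum, ← Finset.sum_sub_distrib, ← Finset.sum_sub_distrib,
        ← Finset.sum_add_distrib]
      refine Finset.sum_congr rfl fun j _ => ?_
      simp only [hC]; ring
    simp only [step, Finset.sum_add_distrib, Finset.sum_sub_distrib, ← Finset.mul_sum]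
    rw [hCvw, hCwv, hCvv]
    have hCH : ∑ i, ∑ j, C i j * H i j = S - 2 * W + t ^ 2 := by
      have step2 : ∀ i, ∑ j, C i j * H i j
          = (∑ j, (H i j)^2) - (∑ j, H i j * (v i * w j))
            - (∑ j, H i j * (w i * v j)) + t * ∑ j, H i j * (v i * v j) := by
        intro i
        rw [Finset.mul_sum, ← Finset.sum_sub_distrib, ← Finset.sum_sub_distrib,
          ← Finset.sum_add_distrib]
        refine Finset.sum_congr rfl fun j _ => ?_
        simp only [hC]; ring
      simp only [step2, Finset.sum_add_distrib, Finset.sum_sub_distrib, ← Finset.mul_sum]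
      rw [hHvw, hHwv, hHvv, ← hS]; ring
    rw [hCH]; ring
  -- trace of C
  have htrC : ∑ i, C i i = -t := by
    have : ∀ i, C i i = H i i - v i * w i - w i * v i + t * (v i)^2 := by
      intro i; simp only [hC]; ring
    simp only [this, Finset.sum_add_distrib, Finset.sum_sub_distrib, ← Finset.mul_sum]
    rw [htrH, hv, ht]
    have : ∑ i, w i * v i = ∑ i, v i * w i :=
      Finset.sum_congr rfl fun i _ => by ring
    rw [this]; ring
  -- the projector P
  set P : Fin n → Fin n → ℝ :=
    fun i j => (if i = j then (1:ℝ) else 0) - v i * v j with hP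
  have hCP : ∑ i, ∑ j, C i j * P i j = -t := by
    have : ∀ i, ∑ j, C i j * P i j
        = C i i - v i * ∑ j, C i j * v j := by
      intro i
      simp only [hP, mul_sub, Finset.sum_sub_distrib, Finset.mul_sum]
      congr 1
      · simp
      · exact Finset.sum_congr rfl fun j _ => by ring
    simp only [this, hCv, Finset.sum_sub_distrib, htrC]
    simp
  have hP2 : ∑ i, ∑ j, (P i j) ^ 2 = (n : ℝ) - 1 := by
    have : ∀ i, ∑ j, (P i j) ^ 2
        = ∑ j, ((if i = j then (1:ℝ) else 0) - 2 * ((if i = j then (1:ℝ) else 0) * (v i * v j)) + (v i)^2 * (v j)^2) := by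
      intro i
      refine Finset.sum_congr rfl fun j _ => ?_
      simp only [hP]
      by_cases h : i = j <;> simp [h] <;> ring
    simp only [this, Finset.sum_add_distrib, Finset.sum_sub_distrib, ← Finset.mul_sum, hv]
    have e1 : ∑ i : Fin n, ∑ j, (if i = j then (1:ℝ) else 0) = n := by simp
    have e2 : ∀ i, ∑ j, (if i = j then (1:ℝ) else 0) * (v i * v j) = v i * v i := by
      intro i; simp
    have e3 : ∑ i : Fin n, (v i)^2 * (1:ℝ) = 1 := by simpa using hv
    have e4 : ∑ i : Fin n, (∑ j, (if i = j then (1:ℝ) else 0) * (v i * v j)) = 1 := by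
      simp only [e2]
      rw [← hv]; exact Finset.sum_congr rfl fun i _ => (sq (v i)).symm
    rw [e1, e3, e4]; ring
  -- Cauchy–Schwarz over pairs
  have hCS : (∑ i, ∑ j, C i j * P i j)^2 ≤ (∑ i, ∑ j, (C i j)^2) * (∑ i, ∑ j, (P i j)^2) := by
    have := Finset.sum_mul_sq_le_sq_mul_sq Finset.univ
      (fun p : Fin n × Fin n => C p.1 p.2) (fun p : Fin n × Fin n => P p.1 p.2)
    simpa [Fintype.sum_prod_type] using this
  rw [hCP, hC2, hP2] at hCS
  have hkey : t^2 ≤ (S - 2*W + t^2) * ((n:ℝ) - 1) := by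
    calc t^2 = (-t)^2 := by ring
    _ ≤ _ := hCS
  have htW : t^2 ≤ W := by
    have := Finset.sum_mul_sq_le_sq_mul_sq Finset.univ v w
    rw [hv, one_mul] at this
    calc t^2 = (∑ i, v i * w i)^2 := by rw [ht]
    _ ≤ ∑ i, (w i)^2 := this
    _ = W := hW.symm
  have hCpos : 0 ≤ S - 2*W + t^2 := by
    rw [← hC2]
    exact Finset.sum_nonneg fun i _ => Finset.sum_nonneg fun j _ => sq_nonneg _
  have hnpos : (0:ℝ) < n := by linarith
  have goal' : W * n ≤ ((n:ℝ) - 1) * S := by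
    nlinarith [mul_nonneg (sub_nonneg.mpr hn2) (sub_nonneg.mpr htW)]
  calc ∑ i, (H.mulVec v i)^2 = W := rfl
  _ ≤ ((n:ℝ) - 1) * S / n := by rw [le_div_iff₀ hnpos]; exact goal'
  _ = (((n:ℝ) - 1) / n) * S := by ring
end

section
/- Let n ≥ 1, E = EuclideanSpace ℝ (Fin n), u : E → ℝ and x ∈ E. Assume: (i) u is C² on a neighborhood of x (ContDiffAt ℝ 2 u x); (ii) u is harmonic at x, i.e. ∑ᵢ D²u(x)[eᵢ, eᵢ] = 0, where (eᵢ) is the standard orthonormal basis of E and D²u = iteratedFDeriv ℝ 2 u; and (iii) the gradient ∇u(x) is nonzero. Then the map y ↦ ‖∇u(y)‖ is differentiable at x and its derivative satisfies ‖D(‖∇u‖)(x)‖² ≤ ((n−1)/n) · ∑ᵢ ∑ⱼ (D²u(x)[eᵢ, eⱼ])². -/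
/-!
With `H` the Hessian of `u` at `x` and `ν = ∇u(x)/‖∇u(x)‖`, the derivative of `‖∇u‖` at `x` is
`⟪H ν, ·⟫`, so the claim is `‖H ν‖² ≤ ((n-1)/n) ‖H‖²` for the symmetric, traceless operator `H`.
In an eigenbasis, `‖H ν‖² ≤ max_k λ_k²` and `‖H‖² = ∑ λ_k²`; since `∑ λ_k = 0`, Cauchy–Schwarz
gives `λ_k² = (∑_{j ≠ k} λ_j)² ≤ (n-1)(∑_j λ_j² - λ_k²)`, i.e. `n λ_k² ≤ (n-1) ∑ λ_j²`.
-/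

open scoped RealInnerProductSpace

theorem card_mul_sq_le_of_sum_eq_zero {ι : Type*} [Fintype ι] {a : ι → ℝ}
    (h : ∑ i, a i = 0) (k : ι) :
    Fintype.card ι * a k ^ 2 ≤ (Fintype.card ι - 1) * ∑ i, a i ^ 2 := by
  classical
  have hrest : ∑ i ∈ Finset.univ.erase k, a i = -a k := by
    rw [← Finset.add_sum_erase _ _ (Finset.mem_univ k)] at h
    linarith
  have hsq : ∑ i ∈ Finset.univ.erase k, a i ^ 2 = ∑ i, a i ^ 2 - a k ^ 2 := by
    rw [← Finset.add_sum_erase _ _ (Finset.mem_univ k)]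
    ring
  have hcs := sq_sum_le_card_mul_sum_sq (s := Finset.univ.erase k) (f := a)
  rw [hrest, hsq, Finset.card_erase_of_mem (Finset.mem_univ k), Finset.card_univ,
    Nat.cast_sub (Fintype.card_pos_iff.2 ⟨k⟩), Nat.cast_one] at hcs
  linarith

namespace LinearMap.IsSymmetric

variable {ι κ E : Type*} [Fintype ι] [Fintype κ] [NormedAddCommGroup E] [InnerProductSpace ℝ E]
  {T : E →ₗ[ℝ] E}

theorem sum_norm_sq_apply_eq (hT : T.IsSymmetric) (b : OrthonormalBasis ι ℝ E)
    (c : OrthonormalBasis κ ℝ E) :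
    ∑ i, ‖T (b i)‖ ^ 2 = ∑ k, ‖T (c k)‖ ^ 2 := by
  calc ∑ i, ‖T (b i)‖ ^ 2 = ∑ i, ∑ k, ⟪T (c k), b i⟫ ^ 2 := by
        refine Finset.sum_congr rfl fun i _ => ?_
        rw [← c.sum_sq_inner_right]
        exact Finset.sum_congr rfl fun k _ => by rw [hT]
    _ = ∑ k, ∑ i, ⟪T (c k), b i⟫ ^ 2 := Finset.sum_comm
    _ = ∑ k, ‖T (c k)‖ ^ 2 := by simp_rw [b.sum_sq_inner_left]

section Eigenvalues

variable [FiniteDimensional ℝ E] {n : ℕ} (hT : T.IsSymmetric) (hn : Module.finrank ℝ E = n)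
include hT

theorem eigenvalues_sq_le_of_trace_eq_zero (htr : T.trace ℝ E = 0) (k : Fin n) :
    hT.eigenvalues hn k ^ 2 ≤ ((n - 1) / n) * ∑ j, hT.eigenvalues hn j ^ 2 := by
  have hsum : ∑ j, hT.eigenvalues hn j = 0 := by
    simpa [hT.trace_eq_sum_eigenvalues hn] using htr
  have hpos : (0 : ℝ) < n := by exact_mod_cast k.pos
  have := card_mul_sq_le_of_sum_eq_zero hsum k
  rw [Fintype.card_fin] at this
  rw [div_mul_eq_mul_div, le_div_iff₀ hpos]
  linarith

theorem sum_norm_sq_apply_eq_sum_eigenvalues_sq (b : OrthonormalBasis ι ℝ E) :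
    ∑ i, ‖T (b i)‖ ^ 2 = ∑ k, hT.eigenvalues hn k ^ 2 := by
  rw [hT.sum_norm_sq_apply_eq b (hT.eigenvectorBasis hn)]
  simp [norm_smul]

theorem norm_apply_sq_le_of_eigenvalues_sq_le {M : ℝ} (hM : ∀ k, hT.eigenvalues hn k ^ 2 ≤ M)
    (w : E) : ‖T w‖ ^ 2 ≤ M * ‖w‖ ^ 2 := by
  set f := hT.eigenvectorBasis hn
  have hcoord : ∀ k, ⟪f k, T w⟫ = hT.eigenvalues hn k * ⟪f k, w⟫ := by
    intro k
    rw [← hT, hT.apply_eigenvectorBasis, real_inner_smul_left]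
    rfl
  calc ‖T w‖ ^ 2 = ∑ k, hT.eigenvalues hn k ^ 2 * ⟪f k, w⟫ ^ 2 := by
        simp_rw [← f.sum_sq_inner_right, hcoord, mul_pow]
    _ ≤ ∑ k, M * ⟪f k, w⟫ ^ 2 := by gcongr with k; exact hM k
    _ = M * ‖w‖ ^ 2 := by rw [← Finset.mul_sum, f.sum_sq_inner_right]

end Eigenvalues

theorem norm_apply_sq_le_of_trace_eq_zero (hT : T.IsSymmetric) (htr : T.trace ℝ E = 0)
    (b : OrthonormalBasis ι ℝ E) (w : E) :
    ‖T w‖ ^ 2 ≤ ((Fintype.card ι - 1) / Fintype.card ι) * (∑ i, ‖T (b i)‖ ^ 2) * ‖w‖ ^ 2 := by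
  have : FiniteDimensional ℝ E := b.toBasis.finiteDimensional_of_finite
  have hn : Module.finrank ℝ E = Fintype.card ι := Module.finrank_eq_card_basis b.toBasis
  rw [hT.sum_norm_sq_apply_eq_sum_eigenvalues_sq hn b]
  exact hT.norm_apply_sq_le_of_eigenvalues_sq_le hn
    (hT.eigenvalues_sq_le_of_trace_eq_zero hn htr) w

end LinearMap.IsSymmetric

theorem HasFDerivAt.norm {G F : Type*} [NormedAddCommGroup G] [NormedSpace ℝ G]
    [NormedAddCommGroup F] [InnerProductSpace ℝ F] {f : G → F} {f' : G →L[ℝ] F} {x : G}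
    (hf : HasFDerivAt f f' x) (h0 : f x ≠ 0) :
    HasFDerivAt (fun y => ‖f y‖) (‖f x‖⁻¹ • (innerSL ℝ (f x)).comp f') x := by
  have hpos : 0 < ‖f x‖ := norm_pos_iff.2 h0
  convert (hf.norm_sq.sqrt (by positivity)) using 1
  · simp [Real.sqrt_sq (norm_nonneg _)]
  · ext v
    simp only [smul_apply, ContinuousLinearMap.comp_apply, coe_innerSL_apply,
      smul_eq_mul, nsmul_eq_mul, Nat.cast_ofNat, Real.sqrt_sq hpos.le]
    field_simp

section Gradient

variable {E : Type*} [NormedAddCommGroup E] [InnerProductSpace ℝ E] [CompleteSpace E]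
  {u : E → ℝ} {x : E}

theorem inner_fderiv_gradient_apply (v w : E) :
    ⟪fderiv ℝ (gradient u) x v, w⟫ = iteratedFDeriv ℝ 2 u x ![v, w] := by
  have : gradient u = (InnerProductSpace.toDual ℝ E).symm ∘ fderiv ℝ u := rfl
  rw [this, LinearIsometryEquiv.comp_fderiv, iteratedFDeriv_two_apply]
  exact InnerProductSpace.toDual_symm_apply

theorem ContDiffAt.differentiableAt_gradient (hu : ContDiffAt ℝ 2 u x) :
    DifferentiableAt ℝ (gradient u) x :=
  (InnerProductSpace.toDual ℝ E).symm.differentiable.differentiableAt.comp x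
    ((hu.fderiv_right (by norm_num)).differentiableAt one_ne_zero)

theorem ContDiffAt.isSymmetric_fderiv_gradient (hu : ContDiffAt ℝ 2 u x) :
    (fderiv ℝ (gradient u) x : E →ₗ[ℝ] E).IsSymmetric := by
  intro v w
  rw [ContinuousLinearMap.coe_coe, ← real_inner_comm v, inner_fderiv_gradient_apply,
    inner_fderiv_gradient_apply, iteratedFDeriv_two_apply, iteratedFDeriv_two_apply]
  exact hu.isSymmSndFDerivAt (by simp) v w

theorem ContDiffAt.hasFDerivAt_norm_gradient (hu : ContDiffAt ℝ 2 u x) (h0 : gradient u x ≠ 0) :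
    HasFDerivAt (fun y => ‖gradient u y‖)
      (‖gradient u x‖⁻¹ • innerSL ℝ (fderiv ℝ (gradient u) x (gradient u x))) x := by
  convert hu.differentiableAt_gradient.hasFDerivAt.norm h0 using 2
  ext v
  simp only [innerSL_apply_apply, ContinuousLinearMap.comp_apply]
  exact hu.isSymmetric_fderiv_gradient _ _

end Gradient

theorem improved_kato_harmonic_general
    (n : ℕ)
    (u : EuclideanSpace ℝ (Fin n) → ℝ) (x : EuclideanSpace ℝ (Fin n))
    (hu : ContDiffAt ℝ 2 u x)
    (hharm : ∑ i, iteratedFDeriv ℝ 2 u x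
      ![EuclideanSpace.single i (1 : ℝ), EuclideanSpace.single i (1 : ℝ)] = 0)
    (hgrad : gradient u x ≠ 0) :
    DifferentiableAt ℝ (fun y => ‖gradient u y‖) x ∧
      ‖fderiv ℝ (fun y => ‖gradient u y‖) x‖ ^ 2 ≤
        (((n : ℝ) - 1) / n) *
          ∑ i, ∑ j, (iteratedFDeriv ℝ 2 u x
            ![EuclideanSpace.single i (1 : ℝ), EuclideanSpace.single j (1 : ℝ)]) ^ 2 := by
  set H := fderiv ℝ (gradient u) x
  set e := EuclideanSpace.basisFun (Fin n) ℝ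
  have hD := hu.hasFDerivAt_norm_gradient hgrad
  have htrace : LinearMap.trace ℝ _ H.toLinearMap = 0 := by
    rw [LinearMap.trace_eq_sum_inner _ e, ← hharm]
    refine Finset.sum_congr rfl fun i _ => ?_
    rw [real_inner_comm, ContinuousLinearMap.coe_coe, inner_fderiv_gradient_apply,
      EuclideanSpace.basisFun_apply]
  have hHS : ∑ i, ∑ j, (iteratedFDeriv ℝ 2 u x
      ![EuclideanSpace.single i (1 : ℝ), EuclideanSpace.single j (1 : ℝ)]) ^ 2 =
      ∑ i, ‖H (e i)‖ ^ 2 := by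
    refine Finset.sum_congr rfl fun i _ => ?_
    rw [← e.sum_sq_inner_left]
    simp only [H, e, EuclideanSpace.basisFun_apply, inner_fderiv_gradient_apply]
  have hkato := hu.isSymmetric_fderiv_gradient.norm_apply_sq_le_of_trace_eq_zero htrace e
    (gradient u x)
  simp only [ContinuousLinearMap.coe_coe, Fintype.card_fin] at hkato
  refine ⟨hD.differentiableAt, ?_⟩
  rw [hD.fderiv, norm_smul, innerSL_apply_norm, hHS, mul_pow, norm_inv, norm_norm, inv_pow,
    inv_mul_le_iff₀ (pow_pos (norm_pos_iff.2 hgrad) 2)]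
  linarith

/-- Improved Kato inequality for harmonic functions on Euclidean space: if `u`
is `C²` near `x`, harmonic at `x`, and `∇u(x) ≠ 0`, then `y ↦ ‖∇u(y)‖` is
differentiable at `x` and `‖D‖∇u‖(x)‖² ≤ ((n-1)/n)·|D²u(x)|²`. -/
theorem improved_kato_harmonic
    (n : ℕ) (hn : 1 ≤ n)
    (u : EuclideanSpace ℝ (Fin n) → ℝ) (x : EuclideanSpace ℝ (Fin n))
    (hu : ContDiffAt ℝ 2 u x)
    (hharm : ∑ i, iteratedFDeriv ℝ 2 u x
      ![EuclideanSpace.single i (1 : ℝ), EuclideanSpace.single i (1 : ℝ)] = 0)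
    (hgrad : gradient u x ≠ 0) :
    DifferentiableAt ℝ (fun y => ‖gradient u y‖) x ∧
      ‖fderiv ℝ (fun y => ‖gradient u y‖) x‖ ^ 2 ≤
        (((n : ℝ) - 1) / n) *
          ∑ i, ∑ j, (iteratedFDeriv ℝ 2 u x
            ![EuclideanSpace.single i (1 : ℝ), EuclideanSpace.single j (1 : ℝ)]) ^ 2 :=
  improved_kato_harmonic_general n u x hu hharm hgrad
end

section
/- Let n ≥ 1, E = EuclideanSpace ℝ (Fin n), U ⊆ E open, and let u : E → ℝ be C² on U and harmonic on U, i.e. ∑ᵢ D²u(x)[eᵢ, eᵢ] = 0 for every x ∈ U, where (eᵢ) is the standard orthonormal basis and D²u = iteratedFDeriv ℝ 2 u. Let φ : E → ℝ be C¹ with compact support and tsupport φ ⊆ U. Then ∫_U ‖∇u(x)‖² φ(x)² dx ≤ 4 ∫_U u(x)² ‖∇φ(x)‖² dx, where ∇ denotes the gradient and the integrals are with respect to Lebesgue measure on E. -/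
/-!
Integrating `φ² ∂ᵢ(u ∂ᵢu)` by parts in each coordinate direction and summing over `i` gives,
since `∑ᵢ ∂ᵢ(u ∂ᵢu) = ‖∇u‖² + u Δu` and `Δu = 0` on `tsupport φ`,
`∫ ‖∇u‖² φ² = -2 ∫ u φ ⟪∇φ, ∇u⟫`. The pointwise Young inequality
`-2 u φ ⟪∇φ, ∇u⟫ ≤ ‖∇u‖² φ² / 2 + 2 u² ‖∇φ‖²` then yields
`∫ ‖∇u‖² φ² ≤ ½ ∫ ‖∇u‖² φ² + 2 ∫ u² ‖∇φ‖²`; all integrals are finite because the integrands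
are continuous near, and vanish off, the compact set `tsupport φ`.
-/

open MeasureTheory Filter Topology InnerProductSpace Laplacian
open scoped RealInnerProductSpace Gradient

theorem IsCompact.integrable_of_continuousAt {X F : Type*} [TopologicalSpace X] [T2Space X]
    [MeasurableSpace X] [OpensMeasurableSpace X] {μ : Measure X} [IsFiniteMeasureOnCompacts μ]
    [NormedAddCommGroup F] {K : Set X} {g : X → F} (hK : IsCompact K)
    (hg : ∀ x ∈ K, ContinuousAt g x) (h0 : ∀ x ∉ K, g x = 0) : Integrable g μ :=
  ((continuousOn_of_forall_continuousAt hg).integrableOn_compact hK)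
    |>.integrable_of_forall_notMem_eq_zero h0

section

variable {E : Type*} [NormedAddCommGroup E] [InnerProductSpace ℝ E]

theorem neg_two_mul_mul_inner_le (s t : ℝ) (a b : E) :
    -(2 * s * t * ⟪a, b⟫) ≤ ‖b‖ ^ 2 * t ^ 2 / 2 + 2 * (s ^ 2 * ‖a‖ ^ 2) := by
  have h := norm_add_sq_real ((2 * s) • a) (t • b)
  rw [norm_smul, norm_smul, real_inner_smul_left, real_inner_smul_right, Real.norm_eq_abs,
    Real.norm_eq_abs, mul_pow, mul_pow, sq_abs, sq_abs] at h
  nlinarith [sq_nonneg ‖(2 * s) • a + t • b‖]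

theorem gradient_of_notMem_tsupport [CompleteSpace E] {f : E → ℝ} {x : E} (h : x ∉ tsupport f) :
    ∇ f x = 0 := by
  simp [gradient, fderiv_of_notMem_tsupport ℝ h]

variable [FiniteDimensional ℝ E]

theorem ContDiffAt.continuousAt_gradient {f : E → ℝ} {x : E} {n : WithTop ℕ∞}
    (hf : ContDiffAt ℝ n f x) (hn : n ≠ 0) : ContinuousAt (∇ f) x :=
  (toDual ℝ E).symm.continuous.continuousAt.comp (hf.continuousAt_fderiv hn)

theorem OrthonormalBasis.sum_fderiv_mul_fderiv {ι : Type*} [Fintype ι]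
    (b : OrthonormalBasis ι ℝ E) (f g : E → ℝ) (x : E) :
    ∑ i, fderiv ℝ f x (b i) * fderiv ℝ g x (b i) = ⟪∇ f x, ∇ g x⟫ := by
  rw [← b.sum_inner_mul_inner]
  refine Finset.sum_congr rfl fun i _ ↦ ?_
  rw [inner_gradient_left, real_inner_comm, inner_gradient_left]

theorem ContDiffAt.laplacian_eq_sum_fderiv_fderiv {ι : Type*} [Fintype ι] {u : E → ℝ} {x : E}
    (hu : ContDiffAt ℝ 2 u x) (b : OrthonormalBasis ι ℝ E) :
    Δ u x = ∑ i, fderiv ℝ (fun y ↦ fderiv ℝ u y (b i)) x (b i) := by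
  have hdu : DifferentiableAt ℝ (fderiv ℝ u) x :=
    (hu.fderiv_right (m := 1) le_rfl).differentiableAt one_ne_zero
  rw [laplacian_eq_iteratedFDeriv_orthonormalBasis u b]
  refine Finset.sum_congr rfl fun i _ ↦ ?_
  rw [iteratedFDeriv_two_apply, fderiv_clm_apply hdu (differentiableAt_const _)]
  simp

theorem ContDiffAt.sum_fderiv_mul_fderiv_apply {ι : Type*} [Fintype ι] {u : E → ℝ} {x : E}
    (hu : ContDiffAt ℝ 2 u x) (b : OrthonormalBasis ι ℝ E) :
    ∑ i, fderiv ℝ (fun y ↦ u y * fderiv ℝ u y (b i)) x (b i) = ‖∇ u x‖ ^ 2 + u x * Δ u x := by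
  have hdu : DifferentiableAt ℝ (fderiv ℝ u) x :=
    (hu.fderiv_right (m := 1) le_rfl).differentiableAt one_ne_zero
  rw [← real_inner_self_eq_norm_sq, ← b.sum_fderiv_mul_fderiv,
    hu.laplacian_eq_sum_fderiv_fderiv b, Finset.mul_sum, ← Finset.sum_add_distrib]
  refine Finset.sum_congr rfl fun i _ ↦ ?_
  have hdui : DifferentiableAt ℝ (fun y ↦ fderiv ℝ u y (b i)) x :=
    hdu.clm_apply (differentiableAt_const _)
  rw [fderiv_fun_mul (hu.differentiableAt two_ne_zero) hdui]
  simp only [add_apply, smul_apply, smul_eq_mul]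
  ring

end

namespace InnerProductSpace

variable {E : Type*} [NormedAddCommGroup E] [InnerProductSpace ℝ E] [FiniteDimensional ℝ E]
  [MeasurableSpace E] [BorelSpace E] {μ : Measure E} [μ.IsAddHaarMeasure]
  {U : Set E} {u φ : E → ℝ}

theorem HarmonicOnNhd.integral_norm_gradient_sq_mul_sq_eq (hu : HarmonicOnNhd u U)
    (hφ : ContDiff ℝ 1 φ) (hφc : HasCompactSupport φ) (hφU : tsupport φ ⊆ U) :
    ∫ x, ‖∇ u x‖ ^ 2 * φ x ^ 2 ∂μ = -∫ x, 2 * u x * φ x * ⟪∇ φ x, ∇ u x⟫ ∂μ := by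
  let b := stdOrthonormalBasis ℝ E
  let g i y := u y * fderiv ℝ u y (b i)
  have hu2 (x) (hx : x ∈ tsupport φ) : ContDiffAt ℝ 2 u x := (hu x (hφU hx)).1
  have hg (i x) (hx : x ∈ tsupport φ) : ContDiffAt ℝ 1 (g i) x :=
    ((hu2 x hx).of_le one_le_two).mul
      (((hu2 x hx).fderiv_right (m := 1) le_rfl).clm_apply contDiffAt_const)
  have hdφ : Continuous (fderiv ℝ φ) := hφ.continuous_fderiv one_ne_zero
  have hdφsq (x v) : fderiv ℝ (fun y ↦ φ y ^ 2) x v = 2 * φ x * fderiv ℝ φ x v := by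
    simp [fderiv_fun_pow 2 (hφ.differentiable one_ne_zero x)]
  have hint₁ (i) : Integrable (fun x ↦ φ x ^ 2 * fderiv ℝ (g i) x (b i)) μ :=
    hφc.isCompact.integrable_of_continuousAt
      (fun x hx ↦ (hφ.continuous.continuousAt.pow 2).mul
        (((hg i x hx).continuousAt_fderiv one_ne_zero).clm_apply continuousAt_const))
      fun x hx ↦ by simp [image_eq_zero_of_notMem_tsupport hx]
  have hint₂ (i) : Integrable (fun x ↦ 2 * φ x * fderiv ℝ φ x (b i) * g i x) μ :=
    hφc.isCompact.integrable_of_continuousAt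
      (fun x hx ↦ ((continuousAt_const.mul hφ.continuous.continuousAt).mul
        (hdφ.continuousAt.clm_apply continuousAt_const)).mul (hg i x hx).continuousAt)
      fun x hx ↦ by simp [image_eq_zero_of_notMem_tsupport hx]
  have hibp (i) : ∫ x, φ x ^ 2 * fderiv ℝ (g i) x (b i) ∂μ =
      -∫ x, 2 * φ x * fderiv ℝ φ x (b i) * g i x ∂μ := by
    have htsupport : tsupport (fun y ↦ φ y ^ 2) = tsupport φ := by
      simp [tsupport, Function.support_pow]
    simp only [← hdφsq]
    refine integral_mul_fderiv_eq_neg_fderiv_mul_of_integrable ?_ (hint₁ i) ?_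
      (fun x _ ↦ (hφ.differentiable one_ne_zero x).pow 2)
      (fun x hx ↦ (hg i x (htsupport ▸ hx)).differentiableAt one_ne_zero)
    · simpa only [hdφsq] using hint₂ i
    · exact hφc.isCompact.integrable_of_continuousAt
        (fun x hx ↦ (hφ.continuous.continuousAt.pow 2).mul (hg i x hx).continuousAt)
        fun x hx ↦ by simp [image_eq_zero_of_notMem_tsupport hx]
  calc ∫ x, ‖∇ u x‖ ^ 2 * φ x ^ 2 ∂μ
      = ∫ x, ∑ i, φ x ^ 2 * fderiv ℝ (g i) x (b i) ∂μ := by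
        refine integral_congr_ae (Eventually.of_forall fun x ↦ ?_)
        by_cases hx : x ∈ tsupport φ
        · simp only [← Finset.mul_sum, g, (hu2 x hx).sum_fderiv_mul_fderiv_apply b,
            (hu x (hφU hx)).2.self_of_nhds, Pi.zero_apply]
          ring
        · simp [image_eq_zero_of_notMem_tsupport hx]
    _ = ∑ i, ∫ x, φ x ^ 2 * fderiv ℝ (g i) x (b i) ∂μ :=
        integral_finsetSum _ fun i _ ↦ hint₁ i
    _ = -∫ x, ∑ i, 2 * φ x * fderiv ℝ φ x (b i) * g i x ∂μ := by
        simp only [hibp, Finset.sum_neg_distrib, integral_finsetSum _ fun i _ ↦ hint₂ i]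
    _ = -∫ x, 2 * u x * φ x * ⟪∇ φ x, ∇ u x⟫ ∂μ := by
        simp only [g, ← b.sum_fderiv_mul_fderiv, Finset.mul_sum]
        exact congrArg _ (integral_congr_ae (.of_forall fun x ↦
          Finset.sum_congr rfl fun i _ ↦ by ring))

theorem HarmonicOnNhd.integral_norm_gradient_sq_mul_sq_le (hu : HarmonicOnNhd u U)
    (hφ : ContDiff ℝ 1 φ) (hφc : HasCompactSupport φ) (hφU : tsupport φ ⊆ U) :
    ∫ x, ‖∇ u x‖ ^ 2 * φ x ^ 2 ∂μ ≤ 4 * ∫ x, u x ^ 2 * ‖∇ φ x‖ ^ 2 ∂μ := by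
  have hdu (x) (hx : x ∈ tsupport φ) : ContinuousAt (∇ u) x :=
    (hu x (hφU hx)).1.continuousAt_gradient two_ne_zero
  have hdφ : Continuous (∇ φ) :=
    continuous_iff_continuousAt.2 fun x ↦ hφ.contDiffAt.continuousAt_gradient one_ne_zero
  have hA : Integrable (fun x ↦ ‖∇ u x‖ ^ 2 * φ x ^ 2) μ :=
    hφc.isCompact.integrable_of_continuousAt
      (fun x hx ↦ ((hdu x hx).norm.pow 2).mul (hφ.continuous.continuousAt.pow 2))
      fun x hx ↦ by simp [image_eq_zero_of_notMem_tsupport hx]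
  have hB : Integrable (fun x ↦ u x ^ 2 * ‖∇ φ x‖ ^ 2) μ :=
    hφc.isCompact.integrable_of_continuousAt
      (fun x hx ↦ ((hu x (hφU hx)).1.continuousAt.pow 2).mul (hdφ.continuousAt.norm.pow 2))
      fun x hx ↦ by simp [gradient_of_notMem_tsupport hx]
  have hC : Integrable (fun x ↦ 2 * u x * φ x * ⟪∇ φ x, ∇ u x⟫) μ :=
    hφc.isCompact.integrable_of_continuousAt
      (fun x hx ↦ ((continuousAt_const.mul (hu x (hφU hx)).1.continuousAt).mul
        hφ.continuous.continuousAt).mul (hdφ.continuousAt.inner (hdu x hx)))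
      fun x hx ↦ by simp [image_eq_zero_of_notMem_tsupport hx]
  have habsorb : ∫ x, ‖∇ u x‖ ^ 2 * φ x ^ 2 ∂μ ≤
      (∫ x, ‖∇ u x‖ ^ 2 * φ x ^ 2 ∂μ) / 2 + 2 * ∫ x, u x ^ 2 * ‖∇ φ x‖ ^ 2 ∂μ :=
    calc ∫ x, ‖∇ u x‖ ^ 2 * φ x ^ 2 ∂μ
        = ∫ x, -(2 * u x * φ x * ⟪∇ φ x, ∇ u x⟫) ∂μ := by
          rw [integral_neg, hu.integral_norm_gradient_sq_mul_sq_eq hφ hφc hφU]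
      _ ≤ ∫ x, (‖∇ u x‖ ^ 2 * φ x ^ 2 / 2 + 2 * (u x ^ 2 * ‖∇ φ x‖ ^ 2)) ∂μ :=
          integral_mono hC.neg ((hA.div_const 2).add (hB.const_mul 2))
            fun x ↦ neg_two_mul_mul_inner_le _ _ _ _
      _ = _ := by rw [integral_add (hA.div_const 2) (hB.const_mul 2), integral_div,
            integral_const_mul]
  linarith

end InnerProductSpace

theorem harmonic_caccioppoli_general
    (n : ℕ)
    (U : Set (EuclideanSpace ℝ (Fin n))) (hU : IsOpen U)
    (u φ : EuclideanSpace ℝ (Fin n) → ℝ)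
    (hu : ContDiffOn ℝ 2 u U)
    (hharm : ∀ x ∈ U, ∑ i, iteratedFDeriv ℝ 2 u x
      ![EuclideanSpace.single i (1 : ℝ), EuclideanSpace.single i (1 : ℝ)] = 0)
    (hφ : ContDiff ℝ 1 φ) (hφc : HasCompactSupport φ) (hφU : tsupport φ ⊆ U) :
    ∫ x in U, ‖gradient u x‖ ^ 2 * (φ x) ^ 2 ≤
      4 * ∫ x in U, (u x) ^ 2 * ‖gradient φ x‖ ^ 2 := by
  have hharmonic : HarmonicOnNhd u U := fun x hx ↦
    ⟨hu.contDiffAt (hU.mem_nhds hx), eventually_of_mem (hU.mem_nhds hx) fun y hy ↦ by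
      simpa [laplacian_eq_iteratedFDeriv_orthonormalBasis u (EuclideanSpace.basisFun (Fin n) ℝ)]
        using hharm y hy⟩
  have hφU' {x} (hx : x ∉ U) : x ∉ tsupport φ := fun h ↦ hx (hφU h)
  rw [setIntegral_eq_integral_of_forall_compl_eq_zero fun x hx ↦ by
      simp [image_eq_zero_of_notMem_tsupport (hφU' hx)],
    setIntegral_eq_integral_of_forall_compl_eq_zero fun x hx ↦ by
      simp [gradient_of_notMem_tsupport (hφU' hx)]]
  exact hharmonic.integral_norm_gradient_sq_mul_sq_le hφ hφc hφU

/-- Caccioppoli-type inequality for harmonic functions: if `u` is `C²` and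
harmonic on an open set `U` and `φ` is `C¹` with compact support contained in
`U`, then `∫ ‖∇u‖² φ² ≤ 4 ∫ u² ‖∇φ‖²`. -/
theorem harmonic_caccioppoli
    (n : ℕ) (hn : 1 ≤ n)
    (U : Set (EuclideanSpace ℝ (Fin n))) (hU : IsOpen U)
    (u φ : EuclideanSpace ℝ (Fin n) → ℝ)
    (hu : ContDiffOn ℝ 2 u U)
    (hharm : ∀ x ∈ U, ∑ i, iteratedFDeriv ℝ 2 u x
      ![EuclideanSpace.single i (1 : ℝ), EuclideanSpace.single i (1 : ℝ)] = 0)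
    (hφ : ContDiff ℝ 1 φ) (hφc : HasCompactSupport φ) (hφU : tsupport φ ⊆ U) :
    ∫ x in U, ‖gradient u x‖ ^ 2 * (φ x) ^ 2 ≤
      4 * ∫ x in U, (u x) ^ 2 * ‖gradient φ x‖ ^ 2 :=
  harmonic_caccioppoli_general n U hU u φ hu hharm hφ hφc hφU
end

section
/- Let m ≥ 2 and E = EuclideanSpace ℝ (Fin m). Let S ⊆ E be a compact set whose (m−2)-dimensional Hausdorff measure vanishes: μH[m−2](S) = 0. Then for every ε > 0 there exists a C¹ function ζ : E → ℝ with compact support such that 0 ≤ ζ(x) ≤ 1 for all x, ζ = 1 on an open neighborhood of S, and ∫_E ‖Dζ(x)‖² dx < ε, where Dζ = fderiv ℝ ζ and the integral is with respect to Lebesgue measure. In other words, S has vanishing 2-capacity. -/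
/-!
By compactness and `μH[m-2] S = 0`, `S` is covered by finitely many balls `B(yᵢ, rᵢ)` with
`∑ rᵢ ^ (m-2)` as small as we like. Fix a bump `φ` equal to `1` on the unit ball, rescale it to
`ηᵢ x = φ ((x - yᵢ) / rᵢ)`, so that `∫ ‖Dηᵢ‖² = rᵢ ^ (m-2) ∫ ‖Dφ‖²`, and glue with
`ζ = smoothTransition (∑ ηᵢ²)`. By Cauchy–Schwarz `‖D(∑ ηᵢ²)‖² ≤ 4 (∑ ηᵢ²) ∑ ‖Dηᵢ‖²`, and the
factor `∑ ηᵢ²` is harmless because `smoothTransition` is constant beyond `1`. Hence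
`∫ ‖Dζ‖² ≲ ∑ rᵢ ^ (m-2)`, with no cross terms from overlapping balls.
-/

open scoped ENNReal
open MeasureTheory Metric Set Module Real

section DirichletEnergy

variable {E : Type*} [NormedAddCommGroup E] [NormedSpace ℝ E]

lemma norm_fderiv_sum_sq_sq_le {ι : Type*} (s : Finset ι) {g : ι → E → ℝ} {x : E}
    (hg : ∀ i ∈ s, DifferentiableAt ℝ (g i) x) :
    ‖fderiv ℝ (fun y => ∑ i ∈ s, g i y ^ 2) x‖ ^ 2 ≤
      4 * (∑ i ∈ s, g i x ^ 2) * ∑ i ∈ s, ‖fderiv ℝ (g i) x‖ ^ 2 := by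
  have hQ : HasFDerivAt (fun y => ∑ i ∈ s, g i y ^ 2)
      (∑ i ∈ s, (2 * g i x) • fderiv ℝ (g i) x) x := by
    refine HasFDerivAt.fun_sum fun i hi => ?_
    simpa using (hg i hi).hasFDerivAt.pow 2
  rw [hQ.fderiv]
  calc ‖∑ i ∈ s, (2 * g i x) • fderiv ℝ (g i) x‖ ^ 2
      ≤ (2 * ∑ i ∈ s, |g i x| * ‖fderiv ℝ (g i) x‖) ^ 2 := by
        gcongr
        refine (norm_sum_le _ _).trans_eq ?_
        simp [Finset.mul_sum, norm_smul, mul_assoc]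
    _ ≤ 4 * ((∑ i ∈ s, |g i x| ^ 2) * ∑ i ∈ s, ‖fderiv ℝ (g i) x‖ ^ 2) := by
        rw [mul_pow]
        gcongr
        · norm_num
        · exact Finset.sum_mul_sq_le_sq_mul_sq s _ _
    _ = _ := by simp only [sq_abs]; ring

lemma norm_fderiv_comp_sum_sq_sq_le {ψ : ℝ → ℝ} (hψ : Differentiable ℝ ψ) {C : ℝ}
    (hC : ∀ t, 0 ≤ t → deriv ψ t ^ 2 * t ≤ C) {ι : Type*} (s : Finset ι) {g : ι → E → ℝ}
    {x : E} (hg : ∀ i ∈ s, DifferentiableAt ℝ (g i) x) :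
    ‖fderiv ℝ (fun y => ψ (∑ i ∈ s, g i y ^ 2)) x‖ ^ 2 ≤
      4 * C * ∑ i ∈ s, ‖fderiv ℝ (g i) x‖ ^ 2 := by
  set Q := ∑ i ∈ s, g i x ^ 2
  have hQ : DifferentiableAt ℝ (fun y => ∑ i ∈ s, g i y ^ 2) x := by
    fun_prop (disch := assumption)
  have hD : HasFDerivAt (fun y => ψ (∑ i ∈ s, g i y ^ 2))
      (deriv ψ Q • fderiv ℝ (fun y => ∑ i ∈ s, g i y ^ 2) x) x :=
    (hψ Q).hasDerivAt.comp_hasFDerivAt x hQ.hasFDerivAt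
  rw [hD.fderiv, norm_smul, mul_pow, Real.norm_eq_abs, sq_abs]
  calc deriv ψ Q ^ 2 * ‖fderiv ℝ (fun y => ∑ i ∈ s, g i y ^ 2) x‖ ^ 2
      ≤ deriv ψ Q ^ 2 * (4 * Q * ∑ i ∈ s, ‖fderiv ℝ (g i) x‖ ^ 2) := by
        gcongr; exact norm_fderiv_sum_sq_sq_le s hg
    _ = 4 * (deriv ψ Q ^ 2 * Q) * ∑ i ∈ s, ‖fderiv ℝ (g i) x‖ ^ 2 := by ring
    _ ≤ 4 * C * ∑ i ∈ s, ‖fderiv ℝ (g i) x‖ ^ 2 := by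
        gcongr
        exact hC Q (Finset.sum_nonneg fun _ _ => sq_nonneg _)

variable [MeasurableSpace E]

noncomputable def dirichletEnergy (μ : Measure E) (f : E → ℝ) : ℝ :=
  ∫ x, ‖fderiv ℝ f x‖ ^ 2 ∂μ

lemma dirichletEnergy_nonneg (μ : Measure E) (f : E → ℝ) : 0 ≤ dirichletEnergy μ f :=
  integral_nonneg fun _ => sq_nonneg _

lemma integrable_norm_fderiv_sq [OpensMeasurableSpace E] (μ : Measure E)
    [IsFiniteMeasureOnCompacts μ] {f : E → ℝ} (hf : ContDiff ℝ 1 f) (hfc : HasCompactSupport f) :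
    Integrable (fun x => ‖fderiv ℝ f x‖ ^ 2) μ := by
  have hcont : Continuous (fun x => ‖fderiv ℝ f x‖ ^ 2) := by
    have := hf.continuous_fderiv one_ne_zero
    fun_prop
  exact hcont.integrable_of_hasCompactSupport
    ((hfc.fderiv ℝ).norm.comp_left (g := fun t : ℝ => t ^ 2) (by simp))

lemma dirichletEnergy_comp_sum_sq_le [OpensMeasurableSpace E] (μ : Measure E)
    [IsFiniteMeasureOnCompacts μ] {ψ : ℝ → ℝ} (hψ : Differentiable ℝ ψ) {C : ℝ}
    (hC : ∀ t, 0 ≤ t → deriv ψ t ^ 2 * t ≤ C) {ι : Type*} (s : Finset ι) {g : ι → E → ℝ}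
    (hg : ∀ i ∈ s, ContDiff ℝ 1 (g i)) (hgc : ∀ i ∈ s, HasCompactSupport (g i)) :
    dirichletEnergy μ (fun y => ψ (∑ i ∈ s, g i y ^ 2)) ≤
      4 * C * ∑ i ∈ s, dirichletEnergy μ (g i) := by
  have hint i (hi : i ∈ s) := integrable_norm_fderiv_sq μ (hg i hi) (hgc i hi)
  simp only [dirichletEnergy]
  rw [← integral_finsetSum s hint, ← integral_const_mul]
  refine integral_mono_of_nonneg (ae_of_all _ fun _ => sq_nonneg _)
    ((integrable_finsetSum s hint).const_mul _) (ae_of_all _ fun x => ?_)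
  exact norm_fderiv_comp_sum_sq_sq_le hψ hC s fun i hi =>
    (hg i hi).differentiable one_ne_zero x

lemma dirichletEnergy_comp_smul_sub [FiniteDimensional ℝ E] [BorelSpace E] (μ : Measure E)
    [μ.IsAddHaarMeasure] (f : E → ℝ) (y : E) {r : ℝ} (hr : 0 < r) :
    dirichletEnergy μ (fun x => f (r⁻¹ • (x - y))) =
      r ^ ((finrank ℝ E : ℝ) - 2) * dirichletEnergy μ f := by
  have hD x : fderiv ℝ (fun x => f (r⁻¹ • (x - y))) x = r⁻¹ • fderiv ℝ f (r⁻¹ • (x - y)) := by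
    rw [fderiv_comp_sub (f := fun z => f (r⁻¹ • z)) y, fderiv_comp_smul]
  simp only [dirichletEnergy, hD, norm_smul, mul_pow, Real.norm_eq_abs, sq_abs]
  rw [integral_const_mul, integral_sub_right_eq_self (fun z => ‖fderiv ℝ f (r⁻¹ • z)‖ ^ 2) y,
    Measure.integral_comp_inv_smul_of_nonneg μ (fun z => ‖fderiv ℝ f z‖ ^ 2) hr.le,
    smul_eq_mul, ← mul_assoc, Real.rpow_sub hr, Real.rpow_natCast, Real.rpow_two, inv_pow,
    div_eq_inv_mul]

end DirichletEnergy

namespace Real.smoothTransition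

lemma deriv_eq_zero_of_one_lt {t : ℝ} (ht : 1 < t) : deriv smoothTransition t = 0 := by
  have h : smoothTransition =ᶠ[nhds t] fun _ => 1 :=
    Filter.eventually_of_mem (Ioi_mem_nhds ht) fun _ hs => one_of_one_le hs.le
  rw [h.deriv_eq, deriv_const]

lemma exists_deriv_sq_mul_le : ∃ C, ∀ t, 0 ≤ t → deriv smoothTransition t ^ 2 * t ≤ C := by
  have hcont : Continuous fun t => deriv smoothTransition t ^ 2 * t := by
    have := (smoothTransition.contDiff (n := 1)).continuous_deriv le_rfl
    fun_prop
  obtain ⟨C, hC⟩ := (isCompact_Icc (a := (0 : ℝ)) (b := 1)).exists_bound_of_continuousOn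
    hcont.continuousOn
  refine ⟨C, fun t ht => ?_⟩
  rcases le_or_gt t 1 with ht1 | ht1
  · exact (le_abs_self _).trans (hC t ⟨ht, ht1⟩)
  · simpa [deriv_eq_zero_of_one_lt ht1] using
      (norm_nonneg _).trans (hC 0 ⟨le_rfl, zero_le_one⟩)

end Real.smoothTransition

section BallCutoff

variable {E : Type*} [NormedAddCommGroup E] [NormedSpace ℝ E] {ι : Type*}

lemma HasCompactSupport.comp_smul_sub {f : E → ℝ} (hf : HasCompactSupport f) {c : ℝ} (hc : c ≠ 0)
    (y : E) : HasCompactSupport fun x => f (c • (x - y)) :=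
  (hf.comp_smul hc).comp_homeomorph (Homeomorph.subRight y)

variable (φ : E → ℝ) (s : Finset ι) (y : ι → E) (r : ι → ℝ)

noncomputable def ballCutoff (x : E) : ℝ :=
  smoothTransition (∑ i ∈ s, φ ((r i)⁻¹ • (x - y i)) ^ 2)

lemma ballCutoff_mem_Icc (x : E) : ballCutoff φ s y r x ∈ Icc 0 1 :=
  ⟨smoothTransition.nonneg _, smoothTransition.le_one _⟩

variable {φ s y r}

lemma contDiff_ballCutoff {n : ℕ∞} (hφ : ContDiff ℝ n φ) : ContDiff ℝ n (ballCutoff φ s y r) :=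
  smoothTransition.contDiff.comp (by fun_prop)

lemma hasCompactSupport_ballCutoff (hφ : HasCompactSupport φ) (hr : ∀ i ∈ s, r i ≠ 0) :
    HasCompactSupport (ballCutoff φ s y r) := by
  have hsum : HasCompactSupport fun x => ∑ i ∈ s, φ ((r i)⁻¹ • (x - y i)) ^ 2 := by
    rw [← Finset.sum_fn]
    refine Finset.sum_induction _ HasCompactSupport (fun _ _ => HasCompactSupport.add)
      HasCompactSupport.zero fun i hi => ?_
    exact (hφ.comp_smul_sub (inv_ne_zero (hr i hi)) (y i)).comp_left (g := fun t : ℝ => t ^ 2)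
      (zero_pow two_ne_zero)
  exact hsum.comp_left smoothTransition.zero

lemma ballCutoff_eq_one (hφ : ∀ z ∈ ball (0 : E) 1, φ z = 1) (hr : ∀ i ∈ s, 0 < r i) {x : E}
    (hx : x ∈ ⋃ i ∈ s, ball (y i) (r i)) : ballCutoff φ s y r x = 1 := by
  obtain ⟨i, hi, hxi⟩ := mem_iUnion₂.1 hx
  have hφi : φ ((r i)⁻¹ • (x - y i)) = 1 := by
    refine hφ _ ?_
    rw [mem_ball_zero_iff, norm_smul, norm_inv, Real.norm_of_nonneg (hr i hi).le,
      inv_mul_lt_one₀ (hr i hi), ← dist_eq_norm]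
    exact hxi
  refine smoothTransition.one_of_one_le ?_
  calc (1 : ℝ) = φ ((r i)⁻¹ • (x - y i)) ^ 2 := by rw [hφi, one_pow]
    _ ≤ ∑ j ∈ s, φ ((r j)⁻¹ • (x - y j)) ^ 2 :=
      Finset.single_le_sum (f := fun j => φ ((r j)⁻¹ • (x - y j)) ^ 2)
        (fun _ _ => sq_nonneg _) hi

lemma dirichletEnergy_ballCutoff_le [MeasurableSpace E] [BorelSpace E] [FiniteDimensional ℝ E]
    (μ : Measure E) [μ.IsAddHaarMeasure] {C : ℝ}
    (hC : ∀ t, 0 ≤ t → deriv smoothTransition t ^ 2 * t ≤ C) (hφ : ContDiff ℝ 1 φ)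
    (hφc : HasCompactSupport φ) (hr : ∀ i ∈ s, 0 < r i) :
    dirichletEnergy μ (ballCutoff φ s y r) ≤
      4 * C * dirichletEnergy μ φ * ∑ i ∈ s, r i ^ ((finrank ℝ E : ℝ) - 2) := by
  calc dirichletEnergy μ (ballCutoff φ s y r)
      ≤ 4 * C * ∑ i ∈ s, dirichletEnergy μ fun x => φ ((r i)⁻¹ • (x - y i)) :=
        dirichletEnergy_comp_sum_sq_le μ (smoothTransition.contDiff.differentiable one_ne_zero) hC s
          (fun _ _ => by fun_prop) fun i hi => hφc.comp_smul_sub (inv_ne_zero (hr i hi).ne') (y i)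
    _ = 4 * C * dirichletEnergy μ φ * ∑ i ∈ s, r i ^ ((finrank ℝ E : ℝ) - 2) := by
        rw [Finset.sum_congr rfl fun i hi => dirichletEnergy_comp_smul_sub μ φ (y i) (hr i hi),
          ← Finset.sum_mul]
        ring

end BallCutoff

lemma two_mul_max_rpow_le {a b : ℝ} (ha : 0 ≤ a) (hb : 0 ≤ b) (d : ℝ) :
    (2 * max a b) ^ d ≤ 2 ^ d * (a ^ d + b ^ d) := by
  rw [Real.mul_rpow zero_le_two (le_max_of_le_left ha)]
  gcongr
  rcases le_total a b with h | h
  · rw [max_eq_right h]; linarith [Real.rpow_nonneg ha d]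
  · rw [max_eq_left h]; linarith [Real.rpow_nonneg hb d]

section HausdorffCover

variable {X : Type*} {d : ℝ} {S : Set X}

lemma exists_cover_tsum_ediam_rpow_lt [EMetricSpace X] [MeasurableSpace X] [BorelSpace X]
    (hd : 0 < d) (hS : μH[d] S = 0) {η : ℝ≥0∞} (hη : 0 < η) :
    ∃ t : ℕ → Set X, S ⊆ ⋃ n, t n ∧ (∀ n, ediam (t n) ≤ 1) ∧ ∑' n, ediam (t n) ^ d < η := by
  have h : ⨅ (t : ℕ → Set X) (_ : S ⊆ ⋃ n, t n) (_ : ∀ n, ediam (t n) ≤ 1),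
      ∑' n, ⨆ _ : (t n).Nonempty, ediam (t n) ^ d < η := by
    refine lt_of_le_of_lt ?_ hη
    rw [← hS, Measure.hausdorffMeasure_apply]
    exact le_iSup₂ (f := fun (r : ℝ≥0∞) (_ : 0 < r) =>
      ⨅ (t : ℕ → Set X) (_ : S ⊆ ⋃ n, t n) (_ : ∀ n, ediam (t n) ≤ r),
        ∑' n, ⨆ _ : (t n).Nonempty, ediam (t n) ^ d) 1 one_pos
  simp only [iInf_lt_iff] at h
  obtain ⟨t, hcov, hdiam, hsum⟩ := h
  refine ⟨t, hcov, hdiam, lt_of_le_of_lt (ENNReal.tsum_le_tsum fun n => ?_) hsum⟩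
  rcases (t n).eq_empty_or_nonempty with he | hne
  · simp [he, ENNReal.zero_rpow_of_pos hd]
  · exact le_iSup_of_le hne le_rfl

variable [MetricSpace X] [Nonempty X]

lemma exists_iUnion_subset_iUnion_ball {t : ℕ → Set X} (ht : ∀ n, ediam (t n) ≠ ⊤) {ρ : ℕ → ℝ}
    (hρ : ∀ n, 0 < ρ n) :
    ∃ y : ℕ → X, ⋃ n, t n ⊆ ⋃ n, ball (y n) (2 * max (ediam (t n)).toReal (ρ n)) := by
  classical
  refine ⟨fun n => if h : (t n).Nonempty then h.some else Classical.arbitrary X, fun x hx => ?_⟩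
  obtain ⟨n, hxn⟩ := mem_iUnion.1 hx
  have hne : (t n).Nonempty := ⟨x, hxn⟩
  have hdist : dist x hne.some ≤ (ediam (t n)).toReal := by
    rw [dist_edist]
    exact ENNReal.toReal_mono (ht n) (edist_le_ediam_of_mem hxn hne.some_mem)
  refine mem_iUnion.2 ⟨n, mem_ball.2 ?_⟩
  simp only [dif_pos hne]
  linarith [le_max_left (ediam (t n)).toReal (ρ n),
    (hρ n).trans_le (le_max_right (ediam (t n)).toReal (ρ n))]

variable [MeasurableSpace X] [BorelSpace X]

lemma exists_ball_cover_tsum_rpow_lt (hd : 0 < d) (hS : μH[d] S = 0) {δ : ℝ≥0∞} (hδ : 0 < δ) :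
    ∃ (y : ℕ → X) (r : ℕ → ℝ), (∀ n, 0 < r n) ∧ S ⊆ ⋃ n, ball (y n) (r n) ∧
      ∑' n, ENNReal.ofReal (r n ^ d) < δ := by
  obtain ⟨η, hη, hηδ⟩ :=
    ENNReal.exists_pos_mul_lt (a := 2 * ENNReal.ofReal (2 ^ d)) (by finiteness) hδ.ne'
  obtain ⟨t, hcov, hdiam, hsum⟩ := exists_cover_tsum_ediam_rpow_lt hd hS hη
  obtain ⟨ε, hε, hεsum⟩ := ENNReal.exists_pos_sum_of_countable hη.ne' ℕ
  have hfin n : ediam (t n) ≠ ⊤ := ne_top_of_le_ne_top ENNReal.one_ne_top (hdiam n)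
  let a n := (ediam (t n)).toReal
  -- `ρ n > 0` keeps the radius positive when `t n` is a point.
  let ρ n := (ε n : ℝ) ^ d⁻¹
  have hρ n : 0 < ρ n := Real.rpow_pos_of_pos (hε n) _
  obtain ⟨y, hy⟩ := exists_iUnion_subset_iUnion_ball hfin hρ
  refine ⟨y, fun n => 2 * max (a n) (ρ n),
    fun n => by linarith [(hρ n).trans_le (le_max_right (a n) (ρ n))], hcov.trans hy, ?_⟩
  have hterm n : ENNReal.ofReal ((2 * max (a n) (ρ n)) ^ d) ≤
      ENNReal.ofReal (2 ^ d) * (ediam (t n) ^ d + ε n) := by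
    have ha : ENNReal.ofReal (a n ^ d) = ediam (t n) ^ d := by
      rw [← ENNReal.ofReal_rpow_of_nonneg ENNReal.toReal_nonneg hd.le,
        ENNReal.ofReal_toReal (hfin n)]
    have hρd : ENNReal.ofReal (ρ n ^ d) = ε n := by
      rw [Real.rpow_inv_rpow (ε n).coe_nonneg hd.ne', ENNReal.ofReal_coe_nnreal]
    rw [← ha, ← hρd, ← ENNReal.ofReal_add (Real.rpow_nonneg ENNReal.toReal_nonneg d)
        (Real.rpow_nonneg (hρ n).le d), ← ENNReal.ofReal_mul (by positivity)]
    exact ENNReal.ofReal_le_ofReal (two_mul_max_rpow_le ENNReal.toReal_nonneg (hρ n).le d)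
  calc ∑' n, ENNReal.ofReal ((2 * max (a n) (ρ n)) ^ d)
      ≤ ∑' n, ENNReal.ofReal (2 ^ d) * (ediam (t n) ^ d + ε n) := ENNReal.tsum_le_tsum hterm
    _ = ENNReal.ofReal (2 ^ d) * (∑' n, ediam (t n) ^ d + ∑' n, (ε n : ℝ≥0∞)) := by
      rw [ENNReal.tsum_mul_left, ENNReal.tsum_add]
    _ ≤ ENNReal.ofReal (2 ^ d) * (η + η) := by gcongr
    _ = η * (2 * ENNReal.ofReal (2 ^ d)) := by ring
    _ < δ := hηδ

lemma IsCompact.exists_finite_ball_cover_sum_rpow_lt (hK : IsCompact S) (hd : 0 ≤ d)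
    (hS : μH[d] S = 0) {δ : ℝ} (hδ : 0 < δ) :
    ∃ (t : Finset ℕ) (y : ℕ → X) (r : ℕ → ℝ), (∀ n, 0 < r n) ∧
      S ⊆ ⋃ n ∈ t, ball (y n) (r n) ∧ ∑ n ∈ t, r n ^ d < δ := by
  rcases S.eq_empty_or_nonempty with rfl | hne
  · exact ⟨∅, fun _ => Classical.arbitrary X, fun _ => 1, fun _ => one_pos, empty_subset _,
      by simpa using hδ⟩
  have hd : 0 < d := hd.lt_of_ne fun h => by
    subst h
    simpa [hS] using Measure.one_le_hausdorffMeasure_zero_of_nonempty hne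
  obtain ⟨y, r, hr, hcov, hsum⟩ := exists_ball_cover_tsum_rpow_lt hd hS (ENNReal.ofReal_pos.2 hδ)
  obtain ⟨t, ht⟩ := hK.elim_finite_subcover (fun n => ball (y n) (r n)) (fun _ => isOpen_ball) hcov
  refine ⟨t, y, r, hr, ht, (ENNReal.ofReal_lt_ofReal_iff hδ).1 ?_⟩
  rw [ENNReal.ofReal_sum_of_nonneg fun n _ => Real.rpow_nonneg (hr n).le d]
  exact (ENNReal.sum_le_tsum t).trans_lt hsum

end HausdorffCover

/-- A compact subset of `ℝ^m` with vanishing `(m-2)`-dimensional Hausdorff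
measure has vanishing 2-capacity: for every `ε > 0` there is a compactly
supported `C¹` function `ζ` with `0 ≤ ζ ≤ 1`, `ζ = 1` near `S` and
`∫ ‖Dζ‖² < ε`. -/
theorem null_two_capacity_of_hausdorff_null
    (m : ℕ) (hm : 2 ≤ m)
    (S : Set (EuclideanSpace ℝ (Fin m))) (hS : IsCompact S)
    (hnull : μH[(m : ℝ) - 2] S = 0) :
    ∀ ε : ℝ, 0 < ε →
      ∃ ζ : EuclideanSpace ℝ (Fin m) → ℝ,
        ContDiff ℝ 1 ζ ∧ HasCompactSupport ζ ∧
        (∀ x, 0 ≤ ζ x ∧ ζ x ≤ 1) ∧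
        (∃ V : Set (EuclideanSpace ℝ (Fin m)), IsOpen V ∧ S ⊆ V ∧ ∀ x ∈ V, ζ x = 1) ∧
        ∫ x, ‖fderiv ℝ ζ x‖ ^ 2 < ε := by
  intro ε hε
  obtain ⟨C, hC⟩ := smoothTransition.exists_deriv_sq_mul_le
  let φ : ContDiffBump (0 : EuclideanSpace ℝ (Fin m)) := ⟨1, 2, one_pos, one_lt_two⟩
  set A := 4 * C * dirichletEnergy volume φ
  have hA : 0 ≤ A := by
    have := dirichletEnergy_nonneg volume φ
    have : 0 ≤ C := by simpa using hC 0 le_rfl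
    positivity
  have hd : (0 : ℝ) ≤ m - 2 := by
    rw [sub_nonneg]
    exact_mod_cast hm
  obtain ⟨s, y, r, hr, hcov, hsum⟩ :=
    hS.exists_finite_ball_cover_sum_rpow_lt hd hnull (div_pos hε (by linarith : 0 < A + 1))
  refine ⟨ballCutoff φ s y r, contDiff_ballCutoff φ.contDiff,
    hasCompactSupport_ballCutoff φ.hasCompactSupport fun i _ => (hr i).ne',
    ballCutoff_mem_Icc φ s y r, ⟨_, isOpen_biUnion fun _ _ => isOpen_ball, hcov,
      fun x hx => ballCutoff_eq_one (fun z hz => φ.one_of_mem_closedBall (ball_subset_closedBall hz))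
        (fun i _ => hr i) hx⟩, ?_⟩
  calc dirichletEnergy volume (ballCutoff φ s y r)
      ≤ A * ∑ i ∈ s, r i ^ ((m : ℝ) - 2) := by
        simpa [finrank_euclideanSpace] using dirichletEnergy_ballCutoff_le volume hC φ.contDiff
          φ.hasCompactSupport fun i _ => hr i
    _ ≤ A * (ε / (A + 1)) := by gcongr
    _ < ε := by
        rw [mul_div_assoc', div_lt_iff₀ (by linarith)]
        nlinarith
end
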